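/- Let K : ℝ → ℝ be a smooth nowhere-zero function and let U = {(x¹,x²,x³) ∈ ℝ³ : x² ≠ 0}. The functions α = 0, β = x², δ = 1, ε = x¹, ζ = −1/((x²)²K(x³)) on U have β and ζ nowhere zero and satisfy the full contact system in simplifying coordinates: (S1) α₁ = 0; (S2) βδ₁ = αε₁; (S3) β(αε − δβ)ζ₂ + (αβ₃ − βα₃)ζ² + (β²δ₂ − αβε₂ + αεβ₂ − βεα₂ − 2β)ζ = 0; (S4) β₁ = 0; (S5) ζ₁ = 0. Moreover F := δ − αε/β = 1, and equivalently the reduced equation (T3) holds: F ζ₂ + (α/β)₃ ζ² − (F₂ − 2/β) ζ = 0. -/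

import Mathlib

/-- Partial derivative `∂f/∂xⁱ`. -/
noncomputable def pd (i : Fin 3) (f : (Fin 3 → ℝ) → ℝ) (p : Fin 3 → ℝ) : ℝ :=
  fderiv ℝ f p (Pi.single i 1)

theorem pd_const (i : Fin 3) (c : ℝ) (p : Fin 3 → ℝ) : pd i (fun _ => c) p = 0 := by
  simp [pd]

/-- for `K` smooth nowhere zero and `U = {x² ≠ 0} ⊆ ℝ³`, the data
`α = 0`, `β = x²`, `δ = 1`, `ε = x¹`, `ζ = −1/((x²)²K(x³))` has `β, ζ` nowhere zero
on `U` and satisfies the contact system (S1)–(S5); moreover `F := δ − αε/β = 1` and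
the reduced equation (T3) `Fζ₂ + (α/β)₃ζ² − (F₂ − 2/β)ζ = 0` holds on `U`.
(Coordinates `x¹,x²,x³` are indices `0,1,2`.) -/
theorem stmt_14 (K : ℝ → ℝ) (hK : ContDiff ℝ (⊤ : ℕ∞) K) (hK0 : ∀ t, K t ≠ 0)
    (U : Set (Fin 3 → ℝ)) (hU : U = {p | p 1 ≠ 0})
    (α β δ ε ζ F : (Fin 3 → ℝ) → ℝ)
    (hα : α = fun _ => 0) (hβ : β = fun p => p 1)
    (hδ : δ = fun _ => 1) (hε : ε = fun p => p 0)
    (hζ : ζ = fun p => -(1 / ((p 1) ^ 2 * K (p 2))))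
    (hF : F = fun p => δ p - α p * ε p / β p) :
    ∀ p ∈ U,
      β p ≠ 0 ∧ ζ p ≠ 0 ∧
      pd 0 α p = 0 ∧
      β p * pd 0 δ p = α p * pd 0 ε p ∧
      (β p * (α p * ε p - δ p * β p) * pd 1 ζ p +
        (α p * pd 2 β p - β p * pd 2 α p) * ζ p ^ 2 +
        (β p ^ 2 * pd 1 δ p - α p * β p * pd 1 ε p + α p * ε p * pd 1 β p -
          β p * ε p * pd 1 α p - 2 * β p) * ζ p = 0) ∧
      pd 0 β p = 0 ∧
      pd 0 ζ p = 0 ∧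
      F p = 1 ∧
      (F p * pd 1 ζ p + pd 2 (fun q => α q / β q) p * ζ p ^ 2 -
        (pd 1 F p - 2 / β p) * ζ p = 0) := by
  subst hU hα hβ hδ hε hζ hF
  intro p hp
  have hp1 : p 1 ≠ 0 := hp
  have hg0 : (p 1) ^ 2 * K (p 2) ≠ 0 := mul_ne_zero (pow_ne_zero _ hp1) (hK0 _)
  -- basic derivatives
  have h1 : HasFDerivAt (fun q : Fin 3 → ℝ => q 1)
      (ContinuousLinearMap.proj 1 : (Fin 3 → ℝ) →L[ℝ] ℝ) p :=
    (ContinuousLinearMap.proj 1 : (Fin 3 → ℝ) →L[ℝ] ℝ).hasFDerivAt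
  have h2 : HasFDerivAt (fun q : Fin 3 → ℝ => q 2)
      (ContinuousLinearMap.proj 2 : (Fin 3 → ℝ) →L[ℝ] ℝ) p :=
    (ContinuousLinearMap.proj 2 : (Fin 3 → ℝ) →L[ℝ] ℝ).hasFDerivAt
  have hKp : HasFDerivAt (fun q : Fin 3 → ℝ => K (q 2))
      (deriv K (p 2) • (ContinuousLinearMap.proj 2 : (Fin 3 → ℝ) →L[ℝ] ℝ)) p :=
    ((hK.differentiable (by simp) (p 2)).hasDerivAt).comp_hasFDerivAt p h2
  have hsq : HasFDerivAt (fun q : Fin 3 → ℝ => (q 1) ^ 2)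
      ((((2:ℕ):ℝ) * (p 1) ^ 1) • (ContinuousLinearMap.proj 1 : (Fin 3 → ℝ) →L[ℝ] ℝ)) p :=
    by have := (hasDerivAt_pow 2 (p 1)).comp_hasFDerivAt p h1; simpa [Function.comp_def] using this
  have hg : HasFDerivAt (fun q : Fin 3 → ℝ => (q 1) ^ 2 * K (q 2))
      ((p 1) ^ 2 • (deriv K (p 2) • (ContinuousLinearMap.proj 2 : (Fin 3 → ℝ) →L[ℝ] ℝ)) +
        K (p 2) • ((((2:ℕ):ℝ) * (p 1) ^ 1) •
          (ContinuousLinearMap.proj 1 : (Fin 3 → ℝ) →L[ℝ] ℝ))) p := hsq.mul hKp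
  have hzfun : (fun q : Fin 3 → ℝ => -(1 / ((q 1) ^ 2 * K (q 2)))) =
      fun q : Fin 3 → ℝ => -(((q 1) ^ 2 * K (q 2))⁻¹) := by
    funext q; rw [one_div]
  have hz : HasFDerivAt (fun q : Fin 3 → ℝ => -(1 / ((q 1) ^ 2 * K (q 2))))
      (-(-(((p 1) ^ 2 * K (p 2)) ^ 2)⁻¹ •
        ((p 1) ^ 2 • (deriv K (p 2) • (ContinuousLinearMap.proj 2 : (Fin 3 → ℝ) →L[ℝ] ℝ)) +
          K (p 2) • ((((2:ℕ):ℝ) * (p 1) ^ 1) •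
            (ContinuousLinearMap.proj 1 : (Fin 3 → ℝ) →L[ℝ] ℝ))))) p := by
    rw [hzfun]
    exact ((hasDerivAt_inv hg0).comp_hasFDerivAt p hg).neg
  have hz0 : pd 0 (fun q : Fin 3 → ℝ => -(1 / ((q 1) ^ 2 * K (q 2)))) p = 0 := by
    rw [pd, hz.fderiv]
    simp [Pi.single_apply]
  have hz1 : pd 1 (fun q : Fin 3 → ℝ => -(1 / ((q 1) ^ 2 * K (q 2)))) p =
      (((p 1) ^ 2 * K (p 2)) ^ 2)⁻¹ * (K (p 2) * (2 * p 1)) := by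
    rw [pd, hz.fderiv]
    simp [Pi.single_apply]
  -- F is constantly 1, α/β is constantly 0
  have hFfun : (fun p : Fin 3 → ℝ =>
      (fun _ : Fin 3 → ℝ => (1:ℝ)) p - (fun _ : Fin 3 → ℝ => (0:ℝ)) p * p 0 / p 1) =
      fun _ : Fin 3 → ℝ => (1:ℝ) := by
    funext q; simp
  have hβ1 : pd 1 (fun p : Fin 3 → ℝ => p 1) p = 1 := by
    rw [pd, h1.fderiv]; simp
  have hβ0 : pd 0 (fun p : Fin 3 → ℝ => p 1) p = 0 := by
    rw [pd, h1.fderiv]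
    simp [Pi.single_apply]
  have hβ2 : pd 2 (fun p : Fin 3 → ℝ => p 1) p = 0 := by
    rw [pd, h1.fderiv]
    simp [Pi.single_apply]
  have hKpos : K (p 2) ≠ 0 := hK0 _
  refine ⟨hp1, by simp [hp1, hK0 (p 2)], by simp [pd_const], by simp [pd_const], ?_, hβ0, hz0, by simp, ?_⟩
  · rw [hz1]
    simp only [pd_const, hβ1, hβ2]
    field_simp
    ring
  · simp only [hFfun, zero_div, pd_const]
    rw [hz1]
    field_simp
    ring
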